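/- arXiv:2410.23042 — 2 statements merged into one kernel-verified Lean document; each statement's English description precedes it below -/
import Mathlib

section
/- Consider sequential prediction with f_t(x̃_t) = α_t(x̃_t)·g_t(x̃_t) + (1-α_t(x̃_t))·h_t(x̃_t) where α_t(x̃_t) ∈ [0,1] and the loss ℓ_t is convex in its first argument. Define m_t(α) = α(x̃_t)·(ℓ_t(g_t(x̃_t)) - ℓ_t(h_t(x̃_t))), and let α* be the best comparator for the linear losses m_t (i.e., α*(x̃) = 1 if Σ_{t: x̃_t = x̃}(ℓ_t(g_t(x̃_t)) - ℓ_t(h_t(x̃_t))) < 0 and 0 otherwise). Then for any fixed parameter w* of g: Σ_{t=1}^N ℓ_t(f_t(x̃_t)) - Σ_{t=1}^N ℓ_t(g(x̃_t; w*)) ≤ Regret_N(A_α) + Regret_N(A_g), where Regret_N(A_α) = Σ_t m_t(α_t) - m_t(α*) and Regret_N(A_g) = Σ_t ℓ_t(g_t(x̃_t)) - ℓ_t(g(x̃_t; w*)). -/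
open Finset

/-- Proposition 2: regret decomposition of the bi-level gating algorithm against
the best in-weight predictor `g(·; w*)`. -/
theorem stmt_5 {X E : Type*} [DecidableEq X] [AddCommGroup E] [Module ℝ E]
    (N : ℕ) (xt : Fin N → X)
    (ℓ : Fin N → E → ℝ)
    (hconv : ∀ t, ConvexOn ℝ Set.univ (ℓ t))
    (hbdd : ∀ t e, ℓ t e ∈ Set.Icc (0 : ℝ) 1)
    (gt ht : Fin N → E) (gstar : X → E)
    (a : Fin N → ℝ) (ha : ∀ t, a t ∈ Set.Icc (0 : ℝ) 1)
    (astar : X → ℝ)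
    (hastar : ∀ x : X, astar x =
      if (∑ t ∈ Finset.univ.filter (fun t => xt t = x), (ℓ t (gt t) - ℓ t (ht t))) < 0
      then 1 else 0)
    (f : Fin N → E) (hf : ∀ t, f t = a t • gt t + (1 - a t) • ht t) :
    ∑ t, ℓ t (f t) - ∑ t, ℓ t (gstar (xt t)) ≤
      (∑ t, (a t - astar (xt t)) * (ℓ t (gt t) - ℓ t (ht t))) +
      (∑ t, (ℓ t (gt t) - ℓ t (gstar (xt t)))) := by
  set d : Fin N → ℝ := fun t => ℓ t (gt t) - ℓ t (ht t) with hd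
  -- convexity bound on each term
  have hconvb : ∀ t, ℓ t (f t) ≤ a t * ℓ t (gt t) + (1 - a t) * ℓ t (ht t) := by
    intro t
    have h1 := (ha t).1
    have h2 := (ha t).2
    have := (hconv t).2 (Set.mem_univ (gt t)) (Set.mem_univ (ht t)) h1
      (by linarith : (0:ℝ) ≤ 1 - a t) (by ring)
    simpa [hf t, smul_eq_mul] using this
  -- key grouping inequality
  have key : ∑ t, astar (xt t) * d t ≤ ∑ t, d t := by
    rw [← Finset.sum_fiberwise_of_maps_to (s := Finset.univ) (g := xt) (t := Finset.univ.image xt)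
      (fun t _ => Finset.mem_image_of_mem xt (Finset.mem_univ t)) (fun t => astar (xt t) * d t),
      ← Finset.sum_fiberwise_of_maps_to (s := Finset.univ) (g := xt) (t := Finset.univ.image xt)
      (fun t _ => Finset.mem_image_of_mem xt (Finset.mem_univ t)) d]
    apply Finset.sum_le_sum
    intro x _
    have : ∑ t ∈ Finset.univ.filter (fun t => xt t = x), astar (xt t) * d t
        = astar x * ∑ t ∈ Finset.univ.filter (fun t => xt t = x), d t := by
      rw [Finset.mul_sum]
      apply Finset.sum_congr rfl
      intro t htm
      rw [(Finset.mem_filter.mp htm).2]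
    rw [this, hastar x]
    set S := ∑ t ∈ Finset.univ.filter (fun t => xt t = x), d t
    split_ifs with h
    · simp
    · simp; linarith [not_lt.mp h]
  have hsum : ∑ t, ℓ t (f t) ≤ ∑ t, (a t * ℓ t (gt t) + (1 - a t) * ℓ t (ht t)) :=
    Finset.sum_le_sum fun t _ => hconvb t
  have expand : ∑ t, (a t * ℓ t (gt t) + (1 - a t) * ℓ t (ht t))
      = ∑ t, (a t * d t + ℓ t (ht t)) := by
    apply Finset.sum_congr rfl; intro t _; simp [hd]; ring
  have expand2 : (∑ t, (a t - astar (xt t)) * d t) + (∑ t, (ℓ t (gt t) - ℓ t (gstar (xt t))))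
      = (∑ t, (a t * d t + ℓ t (ht t))) - (∑ t, astar (xt t) * d t)
        + (∑ t, d t) - ∑ t, ℓ t (gstar (xt t)) := by
    simp only [← Finset.sum_sub_distrib, ← Finset.sum_add_distrib]
    apply Finset.sum_congr rfl; intro t _; simp [hd]; ring
  rw [expand] at hsum
  linarith [key, hsum]
end

section
/- Under the bi-level update with best-in-hindsight comparators for all three components, letting f*(x̃) = α*(x̃)g(x̃; w*) + (1-α*(x̃))h(x̃; u*) where α* takes values in {0,1} determined by whichever of the best-in-hindsight predictors g(·; w*), h(·; u*) has smaller cumulative loss on each example, the algorithm's regret satisfies Σ_{t=1}^N ℓ_t(f_t(x̃_t)) - Σ_{t=1}^N ℓ_t(f*(x̃_t)) ≤ Regret_N(A_α) + Regret_{N_IWL}(A_g) + Regret_{N_ICL}(A_h), where N_IWL and N_ICL count the rounds assigned by α* to the in-weight and in-context predictors respectively. -/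
open Finset

/-- Proposition 5: regret decomposition of the bi-level gating algorithm against
the best-in-hindsight mixture `f* = α* g* + (1-α*) h*`, where `α* ∈ {0,1}` picks
whichever of `g*`, `h*` has smaller cumulative loss on each example. -/
theorem stmt_6 {X E : Type*} [DecidableEq X] [AddCommGroup E] [Module ℝ E]
    (N : ℕ) (xt : Fin N → X)
    (ℓ : Fin N → E → ℝ)
    (hconv : ∀ t, ConvexOn ℝ Set.univ (ℓ t))
    (hbdd : ∀ t e, ℓ t e ∈ Set.Icc (0 : ℝ) 1)
    (gt ht : Fin N → E) (gstar hstar : X → E)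
    (a : Fin N → ℝ) (ha : ∀ t, a t ∈ Set.Icc (0 : ℝ) 1)
    (astar : X → ℝ)
    (hastar : ∀ x : X, astar x =
      if (∑ t ∈ Finset.univ.filter (fun t => xt t = x),
            (ℓ t (gstar x) - ℓ t (hstar x))) ≤ 0
      then 1 else 0)
    (f : Fin N → E) (hf : ∀ t, f t = a t • gt t + (1 - a t) • ht t)
    (fstar : Fin N → E)
    (hfstar : ∀ t, fstar t =
      astar (xt t) • gstar (xt t) + (1 - astar (xt t)) • hstar (xt t)) :
    ∑ t, ℓ t (f t) - ∑ t, ℓ t (fstar t) ≤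
      (∑ t, (a t - astar (xt t)) * (ℓ t (gt t) - ℓ t (ht t))) +
      (∑ t, astar (xt t) * (ℓ t (gt t) - ℓ t (gstar (xt t)))) +
      (∑ t, (1 - astar (xt t)) * (ℓ t (ht t) - ℓ t (hstar (xt t)))) := by
  have key : ∀ t, ℓ t (f t) - ℓ t (fstar t) ≤
      (a t - astar (xt t)) * (ℓ t (gt t) - ℓ t (ht t)) +
      astar (xt t) * (ℓ t (gt t) - ℓ t (gstar (xt t))) +
      (1 - astar (xt t)) * (ℓ t (ht t) - ℓ t (hstar (xt t))) := by
    intro t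
    have h1 : ℓ t (f t) ≤ a t * ℓ t (gt t) + (1 - a t) * ℓ t (ht t) := by
      rw [hf t]
      have := (hconv t).2 (Set.mem_univ (gt t)) (Set.mem_univ (ht t))
        (show (0:ℝ) ≤ a t from (ha t).1)
        (show (0:ℝ) ≤ 1 - a t by linarith [(ha t).2])
        (show a t + (1 - a t) = 1 by ring)
      simpa [smul_eq_mul] using this
    have h2 : ℓ t (fstar t) =
        astar (xt t) * ℓ t (gstar (xt t)) + (1 - astar (xt t)) * ℓ t (hstar (xt t)) := by
      rw [hfstar t, hastar (xt t)]
      split <;> simp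
    linarith
  calc ∑ t, ℓ t (f t) - ∑ t, ℓ t (fstar t)
      = ∑ t, (ℓ t (f t) - ℓ t (fstar t)) := by rw [Finset.sum_sub_distrib]
    _ ≤ ∑ t, ((a t - astar (xt t)) * (ℓ t (gt t) - ℓ t (ht t)) +
        astar (xt t) * (ℓ t (gt t) - ℓ t (gstar (xt t))) +
        (1 - astar (xt t)) * (ℓ t (ht t) - ℓ t (hstar (xt t)))) :=
        Finset.sum_le_sum fun t _ => key t
    _ = _ := by rw [Finset.sum_add_distrib, Finset.sum_add_distrib]
end
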